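/- Let ≻ be a linear order on a finite set C that is single-peaked with respect to a linear order ≻' on C, and let X ⊆ C be nonempty. Then the restriction of ≻ to X is single-peaked with respect to the restriction of ≻' to X. -/

import Mathlib

/-!
Let `g` be the peak of `≻` on all of `C` and `p` its peak on `X`. If `x ∈ X` lies strictly
between `p` and `y` on the axis `≻'`, then either `x = g`, or `x` lies between `g` and `y`
(so `x ≻ y` by single-peakedness on `C`), or `x` lies between `g` and `p`; the last case is
impossible, since it would give `x ≻ p` although `p` is ranked first in `X`.
-/

/-- The restriction of `r` to the finite set `X` is single peaked with respect to the
restriction of `r'` to `X`: letting `p` be the element of `X` ranked first within `X`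
by `r`, whenever `p ≻' x ≻' y` or `y ≻' x ≻' p` (for `x, y ∈ X`) we have `x ≻ y`. -/
def SinglePeakedOn {C : Type*} (X : Finset C) (r r' : C → C → Prop) : Prop :=
  ∀ p ∈ X, (∀ x ∈ X, x ≠ p → r p x) →
    ∀ x ∈ X, ∀ y ∈ X, ((r' p x ∧ r' x y) ∨ (r' y x ∧ r' x p)) → r x y

section

variable {C : Type*}

def IsBetween (r : C → C → Prop) (a x b : C) : Prop :=
  (r a x ∧ r x b) ∨ (r b x ∧ r x a)

namespace IsBetween

variable {r : C → C → Prop} {a x b : C}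

theorem ne_left [Std.Irrefl r] (h : IsBetween r a x b) : x ≠ a := by
  rintro rfl
  rcases h with ⟨hxx, -⟩ | ⟨-, hxx⟩ <;> exact irrefl x hxx

theorem ne_right [Std.Irrefl r] (h : IsBetween r a x b) : x ≠ b := by
  rintro rfl
  rcases h with ⟨-, hxx⟩ | ⟨hxx, -⟩ <;> exact irrefl x hxx

theorem eq_or_isBetween_or_isBetween [Std.Trichotomous r] (h : IsBetween r a x b) (c : C) :
    x = c ∨ IsBetween r c x b ∨ IsBetween r c x a := by
  rcases h with ⟨hax, hxb⟩ | ⟨hbx, hxa⟩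
  · rcases trichotomous_of r c x with hcx | rfl | hxc
    exacts [.inr (.inl (.inl ⟨hcx, hxb⟩)), .inl rfl, .inr (.inr (.inr ⟨hax, hxc⟩))]
  · rcases trichotomous_of r x c with hxc | rfl | hcx
    exacts [.inr (.inl (.inr ⟨hbx, hxc⟩)), .inl rfl, .inr (.inr (.inl ⟨hcx, hxa⟩))]

end IsBetween

theorem exists_forall_ne_rel [Finite C] [Nonempty C] (r : C → C → Prop)
    [IsStrictTotalOrder C r] : ∃ g, ∀ x, x ≠ g → r g x := by
  obtain ⟨g, -, hmin⟩ :=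
    (Finite.wellFounded_of_trans_of_irrefl r).has_min Set.univ Set.univ_nonempty
  refine ⟨g, fun x hxg => ?_⟩
  rcases trichotomous_of r g x with hgx | rfl | hxg'
  exacts [hgx, absurd rfl hxg, absurd hxg' (hmin x trivial)]

end

theorem singlePeaked_restriction_general
    {C : Type*} [Fintype C] (r r' : C → C → Prop)
    (hr : IsStrictTotalOrder C r) (hr' : IsStrictTotalOrder C r')
    (hsp : SinglePeakedOn Finset.univ r r')
    (X : Finset C) :
    SinglePeakedOn X r r' := by
  intro p _ hp x hx y _ (hpxy : IsBetween r' p x y)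
  have : Nonempty C := ⟨p⟩
  obtain ⟨g, hg⟩ := exists_forall_ne_rel r
  have hsp_g (x y : C) (h : IsBetween r' g x y) : r x y :=
    hsp g (Finset.mem_univ g) (fun x _ => hg x) x (Finset.mem_univ x) y (Finset.mem_univ y) h
  rcases hpxy.eq_or_isBetween_or_isBetween g with rfl | hgxy | hgxp
  · exact hg y hpxy.ne_right.symm
  · exact hsp_g x y hgxy
  · exact absurd (hsp_g x p hgxp) (asymm (hp x hx hpxy.ne_left))

/-- If a linear order `r` on a finite set `C` is single peaked with respect to a linear
order `r'`, then for any nonempty `X ⊆ C` the restriction of `r` to `X` is single peaked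
with respect to the restriction of `r'` to `X`. -/
theorem singlePeaked_restriction
    {C : Type*} [Fintype C] [DecidableEq C] (r r' : C → C → Prop)
    (hr : IsStrictTotalOrder C r) (hr' : IsStrictTotalOrder C r')
    (hsp : SinglePeakedOn Finset.univ r r')
    (X : Finset C) (hX : X.Nonempty) :
    SinglePeakedOn X r r' :=
  singlePeaked_restriction_general r r' hr hr' hsp X
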